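/- Let G_parity be the group of evenly-signed n×n permutation matrices acting on functions on EVEN_n. For each 0 ≤ k ≤ ⌊n/2⌋ the subspace Pol_k(EVEN_n) (spanned by the e_I with |I| = k when k < n/2, and by the (e_I + e_{Iᶜ})/2 with |I| = n/2 when k = n/2) is an irreducible G_parity-invariant subspace, and F(EVEN_n, ℝ) = Pol₀(EVEN_n) ⊕ ⋯ ⊕ Pol_{⌊n/2⌋}(EVEN_n). -/

import Mathlib

/-!
Under coordinatewise multiplication `EVEN_n` is an elementary abelian 2-group whose characters
are the monomials `e_I`, with `e_{Iᶜ} = e_I` on `EVEN_n`. A nontrivial character sums to zero,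
so `e_I ⬝ᵥ e_J = 0` unless `J = I` or `J = Iᶜ`: the spaces `Pol_k`, `2k ≤ n`, are mutually
orthogonal, hence independent, and they exhaust all functions because
`∑_I e_I(x) e_I(y) = ∏ᵢ (1 + xᵢ yᵢ)` is `2ⁿ` times the indicator of `x = y`.

For irreducibility, take `0 ≠ f ∈ V ≤ Pol_k`; some `e_I` with `|I| = k` is not orthogonal to `f`.
Translations by `EVEN_n` lie in `G_parity`, and convolving `f` with `e_I` gives the nonzero
multiple `(f ⬝ᵥ e_I) e_I` of `e_I` in `V`. Permutations then carry `e_I` to every `e_J` with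
`|J| = k`.
-/

/-- The set `EVEN_n` of `±1` vectors with an even number of `-1`'s, as a type. -/
def EvenPt (n : ℕ) : Type :=
  {x : Fin n → ℝ // (∀ i, x i = 1 ∨ x i = -1) ∧ ∏ i, x i = 1}

/-- The action of an evenly-signed permutation (a permutation `σ` together with signs
`ε` having an even number of `-1`'s, i.e. `∏ i, ε i = 1`) on `EVEN_n`. -/
def parityAct (n : ℕ) (σ : Equiv.Perm (Fin n)) (ε : Fin n → ℝ)
    (hε : (∀ i, ε i = 1 ∨ ε i = -1) ∧ ∏ i, ε i = 1) (x : EvenPt n) : EvenPt n :=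
  ⟨fun i => ε i * x.1 (σ i), by
    refine ⟨fun i => ?_, ?_⟩
    · rcases hε.1 i with h | h <;> rcases x.2.1 (σ i) with h' | h' <;> simp [h, h']
    · rw [Finset.prod_mul_distrib, hε.2, one_mul, Equiv.prod_comp σ x.1, x.2.2]⟩

/-- A subspace of functions on `EVEN_n` is `G_parity`-invariant if it is preserved by
all evenly-signed permutations. -/
def IsParityInvariant (n : ℕ) (V : Submodule ℝ (EvenPt n → ℝ)) : Prop :=
  ∀ (σ : Equiv.Perm (Fin n)) (ε : Fin n → ℝ)
    (hε : (∀ i, ε i = 1 ∨ ε i = -1) ∧ ∏ i, ε i = 1),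
    ∀ f ∈ V, (fun x => f (parityAct n σ ε hε x)) ∈ V

/-- `Pol_k(EVEN_n)`: for `k < n/2` the span of the monomials `e_I` with `|I| = k`; for
`2k = n` the span of the functions `(e_I + e_{Iᶜ})/2` with `|I| = n/2`. -/
def PolEven (n k : ℕ) : Submodule ℝ (EvenPt n → ℝ) :=
  if 2 * k = n then
    Submodule.span ℝ
      {f | ∃ I : Finset (Fin n), I.card = k ∧
        f = fun x : EvenPt n => ((∏ i ∈ I, x.1 i) + ∏ i ∈ Iᶜ, x.1 i) / 2}
  else
    Submodule.span ℝ
      {f | ∃ I : Finset (Fin n), I.card = k ∧ f = fun x : EvenPt n => ∏ i ∈ I, x.1 i}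

open Finset

section DotProduct

variable {ι κ R : Type*} [Fintype ι] [CommRing R]

theorem dotProduct_eq_zero_of_mem_span {s : Set (ι → R)} {f g : ι → R}
    (hs : ∀ v ∈ s, f ⬝ᵥ v = 0) (hg : g ∈ Submodule.span R s) : f ⬝ᵥ g = 0 :=
  Submodule.span_le (p := LinearMap.ker (dotProductBilin R R f)).2 hs hg

theorem dotProduct_eq_zero_of_mem_span_of_mem_span {s t : Set (ι → R)} {f g : ι → R}
    (hst : ∀ u ∈ s, ∀ v ∈ t, u ⬝ᵥ v = 0) (hf : f ∈ Submodule.span R s)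
    (hg : g ∈ Submodule.span R t) : f ⬝ᵥ g = 0 := by
  rw [dotProduct_comm]
  refine dotProduct_eq_zero_of_mem_span (fun u hu => ?_) hf
  rw [dotProduct_comm]
  exact dotProduct_eq_zero_of_mem_span (hst u hu) hg

theorem iSupIndep_of_dotProduct_eq_zero [LinearOrder R] [IsStrictOrderedRing R]
    {p : κ → Submodule R (ι → R)}
    (hp : Pairwise fun j k => ∀ f ∈ p j, ∀ g ∈ p k, f ⬝ᵥ g = 0) : iSupIndep p := by
  intro k
  rw [Submodule.disjoint_def]
  intro f hf hsup
  have hker : ⨆ (j) (_ : j ≠ k), p j ≤ LinearMap.ker (dotProductBilin R R f) :=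
    iSup₂_le fun j hjk g hg => hp hjk.symm f hf g hg
  exact dotProduct_self_eq_zero.1 (hker hsup)

end DotProduct

theorem mul_eq_one_or_neg_one {R : Type*} [Monoid R] [HasDistribNeg R] {a b : R}
    (ha : a = 1 ∨ a = -1) (hb : b = 1 ∨ b = -1) : a * b = 1 ∨ a * b = -1 := by
  rcases ha with rfl | rfl <;> rcases hb with rfl | rfl <;> simp

namespace EvenPt

variable {n : ℕ}

theorem coord_mul_self (x : EvenPt n) (i : Fin n) : x.1 i * x.1 i = 1 := by
  rcases x.2.1 i with h | h <;> simp [h]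

instance : CommGroup (EvenPt n) where
  mul x y := ⟨x.1 * y.1, fun i => mul_eq_one_or_neg_one (x.2.1 i) (y.2.1 i), by
    rw [Pi.mul_def, prod_mul_distrib, x.2.2, y.2.2, one_mul]⟩
  one := ⟨1, fun _ => Or.inl rfl, prod_const_one⟩
  inv x := x
  mul_assoc x y z := Subtype.ext (mul_assoc x.1 y.1 z.1)
  one_mul x := Subtype.ext (one_mul x.1)
  mul_one x := Subtype.ext (mul_one x.1)
  inv_mul_cancel x := Subtype.ext (funext (coord_mul_self x))
  mul_comm x y := Subtype.ext (mul_comm x.1 y.1)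

theorem mul_self (x : EvenPt n) : x * x = 1 := inv_mul_cancel x

theorem parityAct_one (z x : EvenPt n) : parityAct n 1 z.1 z.2 x = z * x := rfl

instance : Finite (EvenPt n) :=
  Finite.of_injective (fun x i => (⟨x.1 i, x.2.1 i⟩ : ({1, -1} : Set ℝ)))
    fun _ _ h => Subtype.ext (funext fun i => congrArg Subtype.val (congrFun h i))

noncomputable instance : Fintype (EvenPt n) := Fintype.ofFinite _

/-- The character `e_I`. -/
def monomial (I : Finset (Fin n)) : EvenPt n →* ℝ where
  toFun x := ∏ i ∈ I, x.1 i
  map_one' := prod_const_one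
  map_mul' _ _ := prod_mul_distrib

theorem monomial_apply (I : Finset (Fin n)) (x : EvenPt n) : monomial I x = ∏ i ∈ I, x.1 i :=
  rfl

theorem monomial_mul_self (I : Finset (Fin n)) (x : EvenPt n) :
    monomial I x * monomial I x = 1 := by
  rw [← map_mul, mul_self, map_one]

theorem monomial_compl (I : Finset (Fin n)) : monomial Iᶜ = monomial I := by
  ext x
  have h : monomial Iᶜ x * monomial I x = 1 := by
    rw [monomial_apply, monomial_apply, compl_eq_univ_sdiff, prod_sdiff (subset_univ I)]
    exact x.2.2
  calc monomial Iᶜ x = monomial Iᶜ x * (monomial I x * monomial I x) := by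
        rw [monomial_mul_self, mul_one]
    _ = monomial I x := by rw [← mul_assoc, h, one_mul]

theorem monomial_union {I J : Finset (Fin n)} (h : Disjoint I J) :
    monomial (I ∪ J) = monomial I * monomial J :=
  MonoidHom.ext fun _ => prod_union h

theorem monomial_mul_monomial (I J : Finset (Fin n)) :
    monomial I * monomial J = monomial (symmDiff I J) := by
  have hsq : monomial (I ∩ J) * monomial (I ∩ J) = 1 :=
    MonoidHom.ext (monomial_mul_self (I ∩ J))
  have hI : monomial I = monomial (I \ J) * monomial (I ∩ J) := by
    rw [← monomial_union (disjoint_sdiff_inter I J), sdiff_union_inter]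
  have hJ : monomial J = monomial (J \ I) * monomial (I ∩ J) := by
    rw [inter_comm, ← monomial_union (disjoint_sdiff_inter J I), sdiff_union_inter]
  calc monomial I * monomial J
      = monomial (I \ J) * monomial (J \ I) * (monomial (I ∩ J) * monomial (I ∩ J)) := by
        rw [hI, hJ]; ac_rfl
    _ = monomial (symmDiff I J) := by
        rw [hsq, mul_one, symmDiff_def, sup_eq_union, monomial_union disjoint_sdiff_sdiff]

def flipPair (i j : Fin n) : EvenPt n :=
  ⟨Pi.mulSingle i (-1) * Pi.mulSingle j (-1), by
    refine ⟨fun t => mul_eq_one_or_neg_one ?_ ?_, by simp [prod_mul_distrib]⟩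
    · by_cases h : t = i <;> simp [h]
    · by_cases h : t = j <;> simp [h]⟩

theorem monomial_flipPair {K : Finset (Fin n)} {i j : Fin n} (hi : i ∈ K) (hj : j ∉ K) :
    monomial K (flipPair i j) = -1 := by
  show ∏ t ∈ K, (Pi.mulSingle i (-1) * Pi.mulSingle j (-1) : Fin n → ℝ) t = -1
  simp [prod_mul_distrib, hi, hj]

theorem sum_monomial_eq_zero {K : Finset (Fin n)} (hK : K.Nonempty) (hK' : K ≠ univ) :
    ∑ x, monomial K x = 0 := by
  refine sum_hom_units_eq_zero _ fun h => ?_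
  obtain ⟨i, hi⟩ := hK
  obtain ⟨j, hj⟩ : ∃ j, j ∉ K := not_forall.1 fun h => hK' (eq_univ_of_forall h)
  have := monomial_flipPair hi hj
  rw [h, MonoidHom.one_apply] at this
  norm_num at this

theorem monomial_dotProduct_monomial {I J : Finset (Fin n)} (hIJ : I ≠ J) (hIJc : J ≠ Iᶜ) :
    ⇑(monomial I) ⬝ᵥ ⇑(monomial J) = 0 := by
  refine (sum_congr rfl fun x _ => ?_).trans
    (sum_monomial_eq_zero (symmDiff_nonempty.2 hIJ) fun h => hIJc ?_)
  · rw [← monomial_mul_monomial, MonoidHom.mul_apply]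
  · rw [← top_eq_univ, symmDiff_eq_top] at h
    exact h.symm.eq_compl

theorem sum_monomial_mul_monomial (x y : EvenPt n) :
    ∑ I, monomial I x * monomial I y = ∏ i, (1 + x.1 i * y.1 i) := by
  rw [prod_one_add, powerset_univ]
  exact sum_congr rfl fun I _ => by rw [monomial_apply, monomial_apply, prod_mul_distrib]

theorem sum_monomial_mul_monomial_self (x : EvenPt n) :
    ∑ I, monomial I x * monomial I x = 2 ^ n := by
  simp only [sum_monomial_mul_monomial, coord_mul_self]
  norm_num

theorem sum_monomial_mul_monomial_of_ne {x y : EvenPt n} (hxy : x ≠ y) :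
    ∑ I, monomial I x * monomial I y = 0 := by
  obtain ⟨i, hi⟩ : ∃ i, x.1 i ≠ y.1 i := not_forall.1 fun h => hxy (Subtype.ext (funext h))
  rw [sum_monomial_mul_monomial]
  refine prod_eq_zero (mem_univ i) ?_
  rcases x.2.1 i with hx | hx <;> rcases y.2.1 i with hy | hy <;> simp_all

theorem span_range_monomial :
    Submodule.span ℝ (Set.range fun I : Finset (Fin n) => ⇑(monomial I)) = ⊤ := by
  classical
  refine eq_top_iff.2 fun f _ => ?_
  rw [pi_eq_sum_univ f]
  refine Submodule.sum_mem _ fun y _ => Submodule.smul_mem _ _ ?_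
  have hdelta : (fun x => if y = x then (1 : ℝ) else 0) =
      ((2 : ℝ) ^ n)⁻¹ • ∑ I, monomial I y • ⇑(monomial I) := by
    funext x
    simp only [Pi.smul_apply, Finset.sum_apply, smul_eq_mul]
    split_ifs with hyx
    · rw [← hyx, sum_monomial_mul_monomial_self, inv_mul_cancel₀ (by positivity)]
    · rw [sum_monomial_mul_monomial_of_ne hyx, mul_zero]
  rw [hdelta]
  exact Submodule.smul_mem _ _
    (Submodule.sum_mem _ fun I _ => Submodule.smul_mem _ _ (Submodule.subset_span ⟨I, rfl⟩))

theorem monomial_comp_parityAct (I : Finset (Fin n)) (σ : Equiv.Perm (Fin n)) (ε : Fin n → ℝ)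
    (hε : (∀ i, ε i = 1 ∨ ε i = -1) ∧ ∏ i, ε i = 1) :
    (fun x => monomial I (parityAct n σ ε hε x)) =
      (∏ i ∈ I, ε i) • ⇑(monomial (I.map σ.toEmbedding)) := by
  funext x
  simp only [Pi.smul_apply, smul_eq_mul, monomial_apply, prod_map]
  exact prod_mul_distrib

theorem half_add_compl_eq_monomial (I : Finset (Fin n)) :
    (fun x : EvenPt n => ((∏ i ∈ I, x.1 i) + ∏ i ∈ Iᶜ, x.1 i) / 2) = ⇑(monomial I) := by
  funext x
  rw [← monomial_apply, ← monomial_apply, monomial_compl]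
  ring

end EvenPt

open EvenPt

section PolEven

variable {n : ℕ}

theorem polEven_eq_span (k : ℕ) :
    PolEven n k = Submodule.span ℝ {f | ∃ I : Finset (Fin n), #I = k ∧ f = ⇑(monomial I)} := by
  unfold PolEven
  split_ifs
  · simp_rw [half_add_compl_eq_monomial]
  · rfl

theorem monomial_mem_polEven (I : Finset (Fin n)) : ⇑(monomial I) ∈ PolEven n #I := by
  rw [polEven_eq_span]
  exact Submodule.subset_span ⟨I, rfl, rfl⟩

theorem polEven_ne_bot {k : ℕ} (hk : k ≤ n) : PolEven n k ≠ ⊥ := by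
  obtain ⟨I, -, rfl⟩ := exists_subset_card_eq (s := (univ : Finset (Fin n))) (by simpa using hk)
  refine (Submodule.ne_bot_iff _).2 ⟨_, monomial_mem_polEven I, fun h => ?_⟩
  simpa using congr_fun h 1

theorem isParityInvariant_polEven (k : ℕ) : IsParityInvariant n (PolEven n k) := by
  intro σ ε hε f hf
  rw [polEven_eq_span] at hf ⊢
  refine (Submodule.map_span_le (LinearMap.funLeft ℝ ℝ (parityAct n σ ε hε)) _ _).2 ?_
    ⟨f, hf, rfl⟩
  rintro _ ⟨I, rfl, rfl⟩
  change (fun x => monomial I (parityAct n σ ε hε x)) ∈ _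
  rw [monomial_comp_parityAct]
  exact Submodule.smul_mem _ _ (Submodule.subset_span ⟨_, card_map _, rfl⟩)

theorem dotProduct_eq_zero_of_mem_polEven {j k : ℕ} (hj : 2 * j ≤ n) (hk : 2 * k ≤ n)
    (hjk : j ≠ k) {f g : EvenPt n → ℝ} (hf : f ∈ PolEven n j) (hg : g ∈ PolEven n k) :
    f ⬝ᵥ g = 0 := by
  rw [polEven_eq_span] at hf hg
  refine dotProduct_eq_zero_of_mem_span_of_mem_span ?_ hf hg
  rintro _ ⟨I, rfl, rfl⟩ _ ⟨J, rfl, rfl⟩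
  refine monomial_dotProduct_monomial (fun h => hjk (h ▸ rfl)) fun h => ?_
  have hcompl := card_compl I
  rw [← h, Fintype.card_fin] at hcompl
  have := card_le_univ I
  simp only [Fintype.card_fin] at this
  omega

theorem iSupIndep_polEven : iSupIndep fun j : Fin (n / 2 + 1) => PolEven n j :=
  iSupIndep_of_dotProduct_eq_zero fun j k hjk _ hf _ hg =>
    dotProduct_eq_zero_of_mem_polEven (by have := j.2; omega) (by have := k.2; omega)
      (Fin.val_ne_of_ne hjk) hf hg

theorem iSup_polEven_eq_top : ⨆ j : Fin (n / 2 + 1), PolEven n j = ⊤ := by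
  rw [eq_top_iff, ← span_range_monomial, Submodule.span_le, Set.range_subset_iff]
  intro I
  have hmem : ∀ J : Finset (Fin n), 2 * #J ≤ n →
      ⇑(monomial J) ∈ ⨆ j : Fin (n / 2 + 1), PolEven n j :=
    fun J hJ => Submodule.mem_iSup_of_mem ⟨#J, by omega⟩ (monomial_mem_polEven J)
  by_cases hI : 2 * #I ≤ n
  · exact hmem I hI
  · rw [← monomial_compl]
    exact hmem _ (by rw [card_compl, Fintype.card_fin]; omega)

theorem smul_monomial_mem {V : Submodule ℝ (EvenPt n → ℝ)} (hV : IsParityInvariant n V)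
    {f : EvenPt n → ℝ} (hf : f ∈ V) (I : Finset (Fin n)) :
    (f ⬝ᵥ ⇑(monomial I)) • ⇑(monomial I) ∈ V := by
  have hconv : ∑ z, monomial I z • (fun x => f (parityAct n 1 z.1 z.2 x)) =
      (f ⬝ᵥ ⇑(monomial I)) • ⇑(monomial I) := by
    funext x
    simp only [Finset.sum_apply, Pi.smul_apply, smul_eq_mul, parityAct_one, dotProduct,
      sum_mul]
    rw [← Equiv.sum_comp (Equiv.mulRight x)]
    simp only [Equiv.coe_mulRight, mul_assoc, mul_self, mul_one, map_mul]
    exact sum_congr rfl fun _ _ => by ring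
  rw [← hconv]
  exact Submodule.sum_mem _ fun z _ => Submodule.smul_mem _ _ (hV 1 z.1 z.2 f hf)

theorem monomial_mem_of_card_eq {V : Submodule ℝ (EvenPt n → ℝ)} (hV : IsParityInvariant n V)
    {I J : Finset (Fin n)} (hI : ⇑(monomial I) ∈ V) (hIJ : #I = #J) : ⇑(monomial J) ∈ V := by
  obtain ⟨σ, rfl⟩ := Equiv.Perm.exists_map_finset_eq I J hIJ
  have hone : ∏ i ∈ I, (1 : EvenPt n).1 i = 1 := prod_const_one
  simpa only [monomial_comp_parityAct, hone, one_smul] using hV σ _ (1 : EvenPt n).2 _ hI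

theorem eq_polEven_of_le {k : ℕ} {V : Submodule ℝ (EvenPt n → ℝ)} (hle : V ≤ PolEven n k)
    (hV : IsParityInvariant n V) (hne : V ≠ ⊥) : V = PolEven n k := by
  obtain ⟨f, hf, hf0⟩ := Submodule.exists_mem_ne_zero_of_ne_bot hne
  obtain ⟨I, hI, hfI⟩ : ∃ I : Finset (Fin n), #I = k ∧ f ⬝ᵥ ⇑(monomial I) ≠ 0 := by
    by_contra! h
    have hfk := hle hf
    rw [polEven_eq_span] at hfk
    refine hf0 (dotProduct_self_eq_zero.1 (dotProduct_eq_zero_of_mem_span ?_ hfk))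
    rintro _ ⟨I, hI, rfl⟩
    exact h I hI
  have hIV : ⇑(monomial I) ∈ V := by
    simpa [smul_smul, hfI] using V.smul_mem (f ⬝ᵥ ⇑(monomial I))⁻¹ (smul_monomial_mem hV hf I)
  refine le_antisymm hle ?_
  rw [polEven_eq_span, Submodule.span_le]
  rintro _ ⟨J, hJ, rfl⟩
  exact monomial_mem_of_card_eq hV hIV (hI.trans hJ.symm)

end PolEven

/-- Each `Pol_k(EVEN_n)` for `0 ≤ k ≤ ⌊n/2⌋` is a nonzero irreducible
`G_parity`-invariant subspace, and the space of functions on `EVEN_n` is the internal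
direct sum `Pol₀(EVEN_n) ⊕ ⋯ ⊕ Pol_{⌊n/2⌋}(EVEN_n)`. -/
theorem polEven_irreducible_decomposition (n : ℕ) :
    (∀ k, 2 * k ≤ n →
      PolEven n k ≠ ⊥ ∧
      IsParityInvariant n (PolEven n k) ∧
      ∀ V : Submodule ℝ (EvenPt n → ℝ), V ≤ PolEven n k → IsParityInvariant n V →
        V = ⊥ ∨ V = PolEven n k) ∧
    DirectSum.IsInternal (fun j : Fin (n / 2 + 1) => PolEven n (j : ℕ)) := by
  refine ⟨fun k hk => ⟨polEven_ne_bot (by omega), isParityInvariant_polEven k,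
    fun V hle hV => or_iff_not_imp_left.2 (eq_polEven_of_le hle hV)⟩, ?_⟩
  rw [DirectSum.isInternal_submodule_iff_iSupIndep_and_iSup_eq_top]
  exact ⟨iSupIndep_polEven, iSup_polEven_eq_top⟩
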